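/- arXiv:2605.10543 — 3 statements merged into one kernel-verified Lean document; each statement's English description precedes it below -/
import Mathlib

section
/- For every a > 0, the normalization constant r ↦ C_r is Lipschitz with constant 2/a on [a, ∞): for all r₁, r₂ ≥ a, |C_{r₁} − C_{r₂}| ≤ (2/a) · |r₁ − r₂|. -/
noncomputable section

open MeasureTheory
open scoped RealInnerProductSpace

/-- `sinc x = sin x / x` for `x ≠ 0`, and `sinc 0 = 1`. -/
def sinc (x : ℝ) : ℝ := if x = 0 then 1 else Real.sin x / x

/-- The 2×2 rotation matrix. -/
def Rot (x : ℝ) : Matrix (Fin 2) (Fin 2) ℝ :=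
  !![Real.cos x, -Real.sin x; Real.sin x, Real.cos x]

/-- The RoPE matrix `R_t`: block diagonal with ℓ-th block `Rot (θ ℓ * t)`. -/
def RoPE {n : ℕ} (θ : Fin n → ℝ) (t : ℝ) :
    Matrix (Fin 2 × Fin n) (Fin 2 × Fin n) ℝ :=
  Matrix.blockDiagonal fun ℓ => Rot (θ ℓ * t)

/-- The interval (RoTE) matrix `R_{c,r}`: block diagonal with ℓ-th block
`sinc (θ ℓ * r) • Rot (θ ℓ * c)`. -/
def RoTE {n : ℕ} (θ : Fin n → ℝ) (c r : ℝ) :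
    Matrix (Fin 2 × Fin n) (Fin 2 × Fin n) ℝ :=
  Matrix.blockDiagonal fun ℓ => sinc (θ ℓ * r) • Rot (θ ℓ * c)

/-- The normalization constant `C_r = (1/n) ∑ ℓ, sinc (θ ℓ * r)`. -/
def Cnorm {n : ℕ} (θ : Fin n → ℝ) (r : ℝ) : ℝ :=
  (1 / (n : ℝ)) * ∑ ℓ : Fin n, sinc (θ ℓ * r)

/-- Action of a `2n × 2n` matrix on Euclidean space `ℝ^{2n}`. -/
def mApply {n : ℕ} (M : Matrix (Fin 2 × Fin n) (Fin 2 × Fin n) ℝ)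
    (v : EuclideanSpace ℝ (Fin 2 × Fin n)) : EuclideanSpace ℝ (Fin 2 × Fin n) :=
  Matrix.toEuclideanLin M v

/-- Operator norm on `ℝ^{2n×2n}` induced by the Euclidean norm on `ℝ^{2n}`. -/
def opNorm {n : ℕ} (M : Matrix (Fin 2 × Fin n) (Fin 2 × Fin n) ℝ) : ℝ :=
  ‖Matrix.toEuclideanCLM (𝕜 := ℝ) M‖

lemma sin_sub_sin_abs (x y : ℝ) : |Real.sin x - Real.sin y| ≤ |x - y| := by
  rw [Real.sin_sub_sin]
  calc |2 * Real.sin ((x - y) / 2) * Real.cos ((x + y) / 2)|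
      = 2 * |Real.sin ((x - y) / 2)| * |Real.cos ((x + y) / 2)| := by
        rw [abs_mul, abs_mul, abs_two]
    _ ≤ 2 * |(x - y) / 2| * 1 := by
        apply mul_le_mul (mul_le_mul_of_nonneg_left Real.abs_sin_le_abs (by norm_num))
          (Real.abs_cos_le_one _) (abs_nonneg _) (by positivity)
    _ = |x - y| := by rw [abs_div, abs_two]; ring

lemma sinc_diff_le (x y : ℝ) (hx : x ≠ 0) (hy : y ≠ 0) :
    |sinc x - sinc y| ≤ 2 * |x - y| / |x| := by
  have hxe : sinc x = Real.sin x / x := by simp [sinc, hx]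
  have hye : sinc y = Real.sin y / y := by simp [sinc, hy]
  have hxa : 0 < |x| := abs_pos.2 hx
  have hya : 0 < |y| := abs_pos.2 hy
  have key : sinc x - sinc y = (Real.sin x - Real.sin y) / x + Real.sin y * (1/x - 1/y) := by
    rw [hxe, hye]; field_simp; ring
  rw [key]
  have h1 : |(Real.sin x - Real.sin y) / x| ≤ |x - y| / |x| := by
    rw [abs_div]
    exact div_le_div_of_nonneg_right (sin_sub_sin_abs x y) hxa.le
  have h2 : |Real.sin y * (1/x - 1/y)| ≤ |x - y| / |x| := by
    have : (1/x - 1/y) = (y - x) / (x * y) := by field_simp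
    rw [this, abs_mul, abs_div, abs_mul]
    have hs : |Real.sin y| ≤ |y| := Real.abs_sin_le_abs
    calc |Real.sin y| * (|y - x| / (|x| * |y|))
        ≤ |y| * (|y - x| / (|x| * |y|)) := by
          apply mul_le_mul_of_nonneg_right hs (by positivity)
      _ = |y - x| / |x| := by field_simp
      _ = |x - y| / |x| := by rw [abs_sub_comm]
  calc |(Real.sin x - Real.sin y) / x + Real.sin y * (1/x - 1/y)|
      ≤ |(Real.sin x - Real.sin y) / x| + |Real.sin y * (1/x - 1/y)| := abs_add_le _ _
    _ ≤ |x - y| / |x| + |x - y| / |x| := add_le_add h1 h2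
    _ = 2 * |x - y| / |x| := by ring

/-- for `a > 0`, `r ↦ C_r` is Lipschitz with constant `2/a` on `[a, ∞)`. -/
theorem cnorm_lipschitz (n : ℕ) (hn : 1 ≤ n) (θ : Fin n → ℝ)
    (a : ℝ) (ha : 0 < a) (r₁ r₂ : ℝ) (hr₁ : a ≤ r₁) (hr₂ : a ≤ r₂) :
    |Cnorm θ r₁ - Cnorm θ r₂| ≤ (2 / a) * |r₁ - r₂| := by
  unfold Cnorm
  have hr1 : 0 < r₁ := ha.trans_le hr₁
  have hr2 : 0 < r₂ := ha.trans_le hr₂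
  have hterm : ∀ ℓ : Fin n, |sinc (θ ℓ * r₁) - sinc (θ ℓ * r₂)| ≤ 2 / a * |r₁ - r₂| := by
    intro ℓ
    by_cases hθ : θ ℓ = 0
    · simp [hθ]
      positivity
    · have hx : θ ℓ * r₁ ≠ 0 := mul_ne_zero hθ hr1.ne'
      have hy : θ ℓ * r₂ ≠ 0 := mul_ne_zero hθ hr2.ne'
      have h := sinc_diff_le _ _ hx hy
      have habs : |θ ℓ * r₁| = |θ ℓ| * r₁ := by rw [abs_mul, abs_of_pos hr1]
      have hθpos : 0 < |θ ℓ| := abs_pos.2 hθ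
      calc |sinc (θ ℓ * r₁) - sinc (θ ℓ * r₂)|
          ≤ 2 * |θ ℓ * r₁ - θ ℓ * r₂| / |θ ℓ * r₁| := h
        _ = 2 * |r₁ - r₂| / r₁ := by
            rw [← mul_sub, abs_mul, habs]
            field_simp
        _ ≤ 2 * |r₁ - r₂| / a := by gcongr
        _ = 2 / a * |r₁ - r₂| := by ring
  have hnpos : (0 : ℝ) < n := by exact_mod_cast Nat.lt_of_lt_of_le Nat.zero_lt_one hn
  rw [← mul_sub, ← Finset.sum_sub_distrib, abs_mul]
  calc |1 / (n:ℝ)| * |∑ ℓ : Fin n, (sinc (θ ℓ * r₁) - sinc (θ ℓ * r₂))|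
      ≤ (1/(n:ℝ)) * ∑ ℓ : Fin n, |sinc (θ ℓ * r₁) - sinc (θ ℓ * r₂)| := by
        rw [abs_of_pos (by positivity)]
        exact mul_le_mul_of_nonneg_left (Finset.abs_sum_le_sum_abs _ _) (by positivity)
    _ ≤ (1/(n:ℝ)) * ∑ _ℓ : Fin n, (2 / a * |r₁ - r₂|) := by
        exact mul_le_mul_of_nonneg_left (Finset.sum_le_sum fun ℓ _ => hterm ℓ) (by positivity)
    _ = 2 / a * |r₁ - r₂| := by
        rw [Finset.sum_const, Finset.card_fin, nsmul_eq_mul]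
        field_simp
end
end

section
/- Let c ∈ ℝ, r > 0, and 0 ≤ δ < r, and suppose C_min := inf_{ρ ∈ [r−δ, r+δ]} |C_ρ| > 0. Define Φ(c, ρ) := (1/C_ρ) · R_{c,ρ}. Then for all perturbations Δc, Δr ∈ ℝ with |Δc| ≤ δ and |Δr| ≤ δ, ‖Φ(c + Δc, r + Δr) − Φ(c, r)‖_op ≤ (1/(r − δ)) · ( |Δc| / C_min + (2/C_min + 2/C_min²) · |Δr| ). -/
noncomputable section

open MeasureTheory
open scoped RealInnerProductSpace

/- ===================== auxiliary lemmas ===================== -/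

lemma aux_sin_diff_le (a b : ℝ) : |Real.sin b - Real.sin a| ≤ |b - a| := by
  rw [Real.sin_sub_sin]
  have h1 : |Real.sin ((b-a)/2)| ≤ |(b-a)/2| := Real.abs_sin_le_abs
  have h2 : |Real.cos ((b+a)/2)| ≤ 1 := Real.abs_cos_le_one _
  have h3 : |2 * Real.sin ((b-a)/2) * Real.cos ((b+a)/2)| =
      2 * |Real.sin ((b-a)/2)| * |Real.cos ((b+a)/2)| := by
    rw [abs_mul, abs_mul]; norm_num
  rw [h3]
  have : |(b-a)/2| = |b-a|/2 := by rw [abs_div]; norm_num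
  nlinarith [abs_nonneg (Real.sin ((b-a)/2)), abs_nonneg (b-a)]

lemma aux_circle_bound (a b : ℝ) :
    (Real.cos b - Real.cos a)^2 + (Real.sin b - Real.sin a)^2 ≤ (b - a)^2 := by
  rw [Real.cos_sub_cos, Real.sin_sub_sin]
  have h1 : |Real.sin ((b-a)/2)| ≤ |(b-a)/2| := Real.abs_sin_le_abs
  have hsq : Real.sin ((b-a)/2)^2 ≤ ((b-a)/2)^2 := by
    have := sq_abs (Real.sin ((b-a)/2)); have := sq_abs ((b-a)/2)
    nlinarith [abs_nonneg (Real.sin ((b-a)/2))]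
  nlinarith [Real.sin_sq_add_cos_sq ((b+a)/2), Real.sin_sq_add_cos_sq ((b-a)/2)]

lemma aux_abs_sinc_le_one (x : ℝ) : |sinc x| ≤ 1 := by
  unfold sinc
  split_ifs with h
  · norm_num
  · rw [abs_div]
    rw [div_le_one (abs_pos.mpr h)]
    exact Real.abs_sin_le_abs

lemma aux_abs_sinc_le (x : ℝ) (hx : x ≠ 0) : |sinc x| ≤ 1/|x| := by
  unfold sinc
  rw [if_neg hx, abs_div]
  have hx' : (0:ℝ) < |x| := abs_pos.mpr hx
  have : |Real.sin x| ≤ 1 := abs_le.mpr ⟨Real.neg_one_le_sin x, Real.sin_le_one x⟩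
  gcongr

lemma aux_sinc_sub_sinc (a b : ℝ) (ha : a ≠ 0) (hb : b ≠ 0) :
    |sinc b - sinc a| ≤ 2 * |b - a| / |b| := by
  have hA : (0:ℝ) < |a| := abs_pos.mpr ha
  have hB : (0:ℝ) < |b| := abs_pos.mpr hb
  have key : sinc b - sinc a = (Real.sin b - Real.sin a)/b + Real.sin a * (a - b)/(a*b) := by
    unfold sinc
    rw [if_neg ha, if_neg hb]
    field_simp
    ring
  rw [key]
  calc |(Real.sin b - Real.sin a)/b + Real.sin a * (a - b)/(a*b)|
      ≤ |(Real.sin b - Real.sin a)/b| + |Real.sin a * (a - b)/(a*b)| := abs_add_le _ _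
    _ = |Real.sin b - Real.sin a|/|b| + |Real.sin a| * |a - b|/(|a| * |b|) := by
        rw [abs_div, abs_div, abs_mul, abs_mul]
    _ ≤ |b - a|/|b| + |a| * |a - b|/(|a| * |b|) := by
        apply add_le_add
        · exact div_le_div₀ (abs_nonneg _) (aux_sin_diff_le a b) hB le_rfl
        · exact div_le_div₀ (by positivity)
            (mul_le_mul_of_nonneg_right Real.abs_sin_le_abs (abs_nonneg _))
            (by positivity) le_rfl
    _ = |b - a|/|b| + |b - a|/|b| := by
        rw [abs_sub_comm a b, mul_div_mul_left _ _ (ne_of_gt hA)]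
    _ = 2 * |b - a| / |b| := by ring

/-- operator norm bound for a block-diagonal matrix with scaled-rotation blocks. -/
lemma aux_opNorm_blockDiagonal_le {n : ℕ} (p q : Fin n → ℝ) (K : ℝ) (hK : 0 ≤ K)
    (h : ∀ ℓ, p ℓ ^ 2 + q ℓ ^ 2 ≤ K ^ 2) :
    opNorm (Matrix.blockDiagonal fun ℓ => !![p ℓ, -q ℓ; q ℓ, p ℓ]) ≤ K := by
  set M : Matrix (Fin 2 × Fin n) (Fin 2 × Fin n) ℝ :=
    Matrix.blockDiagonal fun ℓ => !![p ℓ, -q ℓ; q ℓ, p ℓ] with hM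
  apply ContinuousLinearMap.opNorm_le_bound _ hK
  intro v
  have happ : (Matrix.toEuclideanCLM (𝕜 := ℝ) M) v =
      (WithLp.equiv 2 _).symm (Matrix.mulVec M ((WithLp.equiv 2 _) v)) := rfl
  rw [happ]
  set w : (Fin 2 × Fin n) → ℝ := (WithLp.equiv 2 _) v with hw
  have hmv : ∀ i ℓ, (Matrix.mulVec M w) (i, ℓ) =
      ∑ j : Fin 2, (!![p ℓ, -q ℓ; q ℓ, p ℓ] : Matrix (Fin 2) (Fin 2) ℝ) i j * w (j, ℓ) := by
    intro i ℓ
    simp only [Matrix.mulVec, dotProduct, hM, Fintype.sum_prod_type,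
      Matrix.blockDiagonal_apply]
    rw [Finset.sum_comm]
    rw [Finset.sum_eq_single ℓ]
    · simp
    · intro k _ hk; simp [hk.symm, Ne.symm hk]
    · simp
  have hnorm2 : ∀ x : EuclideanSpace ℝ (Fin 2 × Fin n), ‖x‖ = Real.sqrt (∑ i, x i ^ 2) := by
    intro x
    rw [EuclideanSpace.norm_eq]
    congr 1
    exact Finset.sum_congr rfl fun i _ => by rw [Real.norm_eq_abs, sq_abs]
  rw [hnorm2]
  have hvn : ‖v‖ = Real.sqrt (∑ i, w i ^ 2) := by rw [hnorm2]; rfl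
  rw [hvn, ← Real.sqrt_sq hK, ← Real.sqrt_mul (by positivity)]
  apply Real.sqrt_le_sqrt
  have key : ∑ i : Fin 2 × Fin n,
      ((WithLp.equiv 2 _).symm (Matrix.mulVec M w) : EuclideanSpace ℝ (Fin 2 × Fin n)) i ^ 2
      = ∑ ℓ : Fin n, ((Matrix.mulVec M w) (0, ℓ) ^ 2 + (Matrix.mulVec M w) (1, ℓ) ^ 2) := by
    rw [Fintype.sum_prod_type, Fin.sum_univ_two, ← Finset.sum_add_distrib]
    rfl
  rw [key]
  have hrhs : (K ^ 2) * ∑ i, w i ^ 2 = ∑ ℓ : Fin n, K ^ 2 * (w (0, ℓ) ^ 2 + w (1, ℓ) ^ 2) := by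
    rw [Fintype.sum_prod_type, Fin.sum_univ_two, ← Finset.sum_add_distrib, Finset.mul_sum]
  rw [hrhs]
  apply Finset.sum_le_sum
  intro ℓ _
  rw [hmv, hmv]
  simp only [Fin.sum_univ_two]
  have h0 : (!![p ℓ, -q ℓ; q ℓ, p ℓ] : Matrix (Fin 2) (Fin 2) ℝ) 0 0 = p ℓ := rfl
  have h1 : (!![p ℓ, -q ℓ; q ℓ, p ℓ] : Matrix (Fin 2) (Fin 2) ℝ) 0 1 = -q ℓ := rfl
  have h2 : (!![p ℓ, -q ℓ; q ℓ, p ℓ] : Matrix (Fin 2) (Fin 2) ℝ) 1 0 = q ℓ := rfl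
  have h3 : (!![p ℓ, -q ℓ; q ℓ, p ℓ] : Matrix (Fin 2) (Fin 2) ℝ) 1 1 = p ℓ := rfl
  rw [h0, h1, h2, h3]
  have := h ℓ
  nlinarith [sq_nonneg (w (0,ℓ)), sq_nonneg (w (1,ℓ)),
    sq_nonneg (p ℓ * w (0,ℓ) - q ℓ * w (1,ℓ))]

/-- per-block bound via complex numbers. -/
lemma aux_block_bound (s₁ s₂ b₁ b₂ C₁ C₂ Cmin B₁ B₂ B₃ : ℝ)
    (hCmin : 0 < Cmin) (h1 : Cmin ≤ |C₁|) (h2 : Cmin ≤ |C₂|)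
    (hs1 : |s₁| ≤ 1)
    (hT1 : |s₂| * |b₂ - b₁| ≤ B₁)
    (hT2 : |s₂ - s₁| ≤ B₂)
    (hT3 : |C₁ - C₂| ≤ B₃) :
    (s₂/C₂ * Real.cos b₂ - s₁/C₁ * Real.cos b₁)^2
      + (s₂/C₂ * Real.sin b₂ - s₁/C₁ * Real.sin b₁)^2
      ≤ (B₁/Cmin + B₂/Cmin + B₃/Cmin^2)^2 := by
  have hC1 : C₁ ≠ 0 := fun h => by rw [h] at h1; simp at h1; linarith
  have hC2 : C₂ ≠ 0 := fun h => by rw [h] at h2; simp at h2; linarith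
  have hC1p : (0:ℝ) < |C₁| := lt_of_lt_of_le hCmin h1
  have hC2p : (0:ℝ) < |C₂| := lt_of_lt_of_le hCmin h2
  set e₁ : ℂ := ⟨Real.cos b₁, Real.sin b₁⟩ with he₁
  set e₂ : ℂ := ⟨Real.cos b₂, Real.sin b₂⟩ with he₂
  set z : ℂ := (↑(s₂/C₂) : ℂ) * e₂ - (↑(s₁/C₁) : ℂ) * e₁ with hz
  have hre : z.re = s₂/C₂ * Real.cos b₂ - s₁/C₁ * Real.cos b₁ := by
    simp [hz, he₁, he₂, Complex.mul_re]
  have him : z.im = s₂/C₂ * Real.sin b₂ - s₁/C₁ * Real.sin b₁ := by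
    simp [hz, he₁, he₂, Complex.mul_im]
  rw [← hre, ← him]
  have habs : z.re^2 + z.im^2 = ‖z‖ ^ 2 := by
    rw [Complex.sq_norm, Complex.normSq_apply]; ring
  rw [habs]
  apply pow_le_pow_left₀ (norm_nonneg z)
  -- decompose z
  set A : ℂ := (↑(s₂/C₂) : ℂ) * (e₂ - e₁) with hA
  set B : ℂ := (↑((s₂ - s₁)/C₂) : ℂ) * e₁ with hB
  set D : ℂ := (↑((1/C₂ - 1/C₁) * s₁) : ℂ) * e₁ with hD
  have hdecomp : z = A + B + D := by
    rw [hz, hA, hB, hD]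
    push_cast
    field_simp
    ring
  have habs_e1 : ‖e₁‖ = 1 := by
    rw [Complex.norm_def, Complex.normSq_apply, he₁]
    simp only
    rw [show Real.cos b₁ * Real.cos b₁ + Real.sin b₁ * Real.sin b₁ = 1 by
      nlinarith [Real.sin_sq_add_cos_sq b₁]]
    exact Real.sqrt_one
  have habs_ediff : ‖e₂ - e₁‖ ≤ |b₂ - b₁| := by
    rw [Complex.norm_def, Complex.normSq_apply]
    simp only [Complex.sub_re, Complex.sub_im, he₁, he₂]
    rw [← Real.sqrt_sq_eq_abs]
    apply Real.sqrt_le_sqrt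
    nlinarith [aux_circle_bound b₁ b₂]
  have hB₁0 : 0 ≤ B₁ := le_trans (by positivity) hT1
  have hB₂0 : 0 ≤ B₂ := le_trans (abs_nonneg _) hT2
  have hB₃0 : 0 ≤ B₃ := le_trans (abs_nonneg _) hT3
  have hAb : ‖A‖ ≤ B₁/Cmin := by
    rw [hA, norm_mul, Complex.norm_real, Real.norm_eq_abs, abs_div]
    have e1 : |s₂|/|C₂| ≤ |s₂|/Cmin := by gcongr
    calc |s₂|/|C₂| * ‖e₂ - e₁‖ ≤ |s₂|/Cmin * |b₂ - b₁| :=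
          mul_le_mul e1 habs_ediff (norm_nonneg _) (by positivity)
      _ = (|s₂| * |b₂ - b₁|)/Cmin := by ring
      _ ≤ B₁/Cmin := by gcongr
  have hBb : ‖B‖ ≤ B₂/Cmin := by
    rw [hB, norm_mul, Complex.norm_real, Real.norm_eq_abs, habs_e1, mul_one, abs_div]
    gcongr
  have hDb : ‖D‖ ≤ B₃/Cmin^2 := by
    rw [hD, norm_mul, Complex.norm_real, Real.norm_eq_abs, habs_e1, mul_one, abs_mul]
    have key : (1/C₂ - 1/C₁) = (C₁ - C₂)/(C₁ * C₂) := by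
      field_simp
    rw [key, abs_div, abs_mul]
    have hmm : Cmin * Cmin ≤ |C₁| * |C₂| :=
      mul_le_mul h1 h2 hCmin.le (abs_nonneg _)
    calc |C₁ - C₂|/(|C₁| * |C₂|) * |s₁| ≤ |C₁ - C₂|/(|C₁| * |C₂|) * 1 := by
          have h0 : (0:ℝ) ≤ |C₁ - C₂|/(|C₁| * |C₂|) := by positivity
          exact mul_le_mul_of_nonneg_left hs1 h0
      _ = |C₁ - C₂|/(|C₁| * |C₂|) := mul_one _
      _ ≤ B₃/(Cmin * Cmin) := by
          apply div_le_div₀ hB₃0 hT3 (by positivity) hmm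
      _ = B₃/Cmin^2 := by ring
  calc ‖z‖ = ‖A + B + D‖ := by rw [hdecomp]
    _ ≤ ‖A + B‖ + ‖D‖ := norm_add_le _ _
    _ ≤ ‖A‖ + ‖B‖ + ‖D‖ := by
        gcongr; exact norm_add_le _ _
    _ ≤ B₁/Cmin + B₂/Cmin + B₃/Cmin^2 := by gcongr

/-- perturbation bound for the normalized interval encoder
`Φ(c, ρ) = (1/C_ρ) • R_{c,ρ}` under bounded perturbations of center and radius. -/
theorem normalized_rote_perturbation (n : ℕ) (hn : 1 ≤ n) (θ : Fin n → ℝ)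
    (c r δ : ℝ) (hr : 0 < r) (hδ0 : 0 ≤ δ) (hδr : δ < r)
    (Cmin : ℝ)
    (hCmin : Cmin = sInf ((fun ρ => |Cnorm θ ρ|) '' Set.Icc (r - δ) (r + δ)))
    (hCpos : 0 < Cmin)
    (Δc Δr : ℝ) (hΔc : |Δc| ≤ δ) (hΔr : |Δr| ≤ δ) :
    opNorm ((1 / Cnorm θ (r + Δr)) • RoTE θ (c + Δc) (r + Δr)
        - (1 / Cnorm θ r) • RoTE θ c r) ≤
      (1 / (r - δ)) * (|Δc| / Cmin + (2 / Cmin + 2 / Cmin ^ 2) * |Δr|) := by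
  have hrδ : (0:ℝ) < r - δ := sub_pos.2 hδr
  have hCne : Cmin ≠ 0 := ne_of_gt hCpos
  have hrδne : r - δ ≠ 0 := ne_of_gt hrδ
  set ρ₂ := r + Δr with hρ₂def
  obtain ⟨hΔr1, hΔr2⟩ := abs_le.mp hΔr
  have hρ₂lb : r - δ ≤ ρ₂ := by rw [hρ₂def]; linarith
  have hρ₂pos : 0 < ρ₂ := lt_of_lt_of_le hrδ hρ₂lb
  have hmem₂ : ρ₂ ∈ Set.Icc (r - δ) (r + δ) := ⟨hρ₂lb, by rw [hρ₂def]; linarith⟩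
  have hmem₁ : r ∈ Set.Icc (r - δ) (r + δ) := ⟨by linarith, by linarith⟩
  have hbdd : BddBelow ((fun ρ => |Cnorm θ ρ|) '' Set.Icc (r - δ) (r + δ)) :=
    ⟨0, fun x hx => by obtain ⟨ρ, _, rfl⟩ := hx; exact abs_nonneg _⟩
  have hC2 : Cmin ≤ |Cnorm θ ρ₂| := hCmin ▸ csInf_le hbdd ⟨ρ₂, hmem₂, rfl⟩
  have hC1 : Cmin ≤ |Cnorm θ r| := hCmin ▸ csInf_le hbdd ⟨r, hmem₁, rfl⟩
  set C₁ := Cnorm θ r with hC₁def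
  set C₂ := Cnorm θ ρ₂ with hC₂def
  have hsdiff : ∀ ℓ : Fin n, |sinc (θ ℓ * ρ₂) - sinc (θ ℓ * r)| ≤ 2 * |Δr| / (r - δ) := by
    intro ℓ
    by_cases ht : θ ℓ = 0
    · rw [ht]
      simp only [zero_mul, sub_self, abs_zero]
      exact div_nonneg (by positivity) hrδ.le
    · have ha : θ ℓ * r ≠ 0 := mul_ne_zero ht (ne_of_gt hr)
      have hb : θ ℓ * ρ₂ ≠ 0 := mul_ne_zero ht (ne_of_gt hρ₂pos)
      have hkey := aux_sinc_sub_sinc (θ ℓ * r) (θ ℓ * ρ₂) ha hb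
      have habs_b : |θ ℓ * ρ₂| = |θ ℓ| * ρ₂ := by rw [abs_mul, abs_of_pos hρ₂pos]
      have hnum : |θ ℓ * ρ₂ - θ ℓ * r| = |θ ℓ| * |Δr| := by
        rw [show θ ℓ * ρ₂ - θ ℓ * r = θ ℓ * Δr by rw [hρ₂def]; ring, abs_mul]
      have hθ : |θ ℓ| ≠ 0 := abs_ne_zero.mpr ht
      calc |sinc (θ ℓ * ρ₂) - sinc (θ ℓ * r)|
          ≤ 2 * |θ ℓ * ρ₂ - θ ℓ * r| / |θ ℓ * ρ₂| := hkey
        _ = 2 * |Δr| / ρ₂ := by rw [hnum, habs_b]; field_simp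
        _ ≤ 2 * |Δr| / (r - δ) := by gcongr
  have hCdiff : |C₁ - C₂| ≤ 2 * |Δr| / (r - δ) := by
    have hnn : (0:ℝ) < (n:ℝ) := by exact_mod_cast Nat.lt_of_lt_of_le Nat.zero_lt_one hn
    have hh : C₁ - C₂ = (1/(n:ℝ)) * ∑ ℓ : Fin n, (sinc (θ ℓ * r) - sinc (θ ℓ * ρ₂)) := by
      rw [hC₁def, hC₂def]
      unfold Cnorm
      rw [← mul_sub, ← Finset.sum_sub_distrib]
    rw [hh, abs_mul, abs_of_pos (by positivity : (0:ℝ) < 1/(n:ℝ))]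
    calc (1/(n:ℝ)) * |∑ ℓ : Fin n, (sinc (θ ℓ * r) - sinc (θ ℓ * ρ₂))|
        ≤ (1/(n:ℝ)) * ∑ ℓ : Fin n, |sinc (θ ℓ * r) - sinc (θ ℓ * ρ₂)| := by
          gcongr
          exact Finset.abs_sum_le_sum_abs _ _
      _ ≤ (1/(n:ℝ)) * ∑ _ℓ : Fin n, (2*|Δr|/(r-δ)) := by
          gcongr with ℓ _
          rw [abs_sub_comm]; exact hsdiff ℓ
      _ = 2*|Δr|/(r-δ) := by
          rw [Finset.sum_const, Finset.card_univ, Fintype.card_fin, nsmul_eq_mul]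
          field_simp
  set P : Fin n → ℝ := fun ℓ => sinc (θ ℓ * ρ₂)/C₂ * Real.cos (θ ℓ * (c+Δc))
      - sinc (θ ℓ * r)/C₁ * Real.cos (θ ℓ * c) with hP
  set Q : Fin n → ℝ := fun ℓ => sinc (θ ℓ * ρ₂)/C₂ * Real.sin (θ ℓ * (c+Δc))
      - sinc (θ ℓ * r)/C₁ * Real.sin (θ ℓ * c) with hQ
  have hblocks : ∀ ℓ : Fin n,
      (1/C₂) • (sinc (θ ℓ * ρ₂) • Rot (θ ℓ * (c+Δc)))
        - (1/C₁) • (sinc (θ ℓ * r) • Rot (θ ℓ * c)) = !![P ℓ, -Q ℓ; Q ℓ, P ℓ] := by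
    intro ℓ
    rw [hP, hQ]
    unfold Rot
    ext i j
    fin_cases i <;> fin_cases j <;>
      simp [Matrix.smul_apply, smul_eq_mul] <;> ring
  have hMeq : (1 / C₂) • RoTE θ (c + Δc) ρ₂ - (1 / C₁) • RoTE θ c r
      = Matrix.blockDiagonal fun ℓ => !![P ℓ, -Q ℓ; Q ℓ, P ℓ] := by
    unfold RoTE
    rw [← Matrix.blockDiagonal_smul, ← Matrix.blockDiagonal_smul, ← Matrix.blockDiagonal_sub]
    refine congrArg _ (funext fun ℓ => ?_)
    rw [Pi.sub_apply, Pi.smul_apply, Pi.smul_apply]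
    exact hblocks ℓ
  set K := (1 / (r - δ)) * (|Δc| / Cmin + (2 / Cmin + 2 / Cmin ^ 2) * |Δr|) with hKdef
  have hK0 : 0 ≤ K := by
    rw [hKdef]
    apply mul_nonneg (one_div_pos.mpr hrδ).le
    apply add_nonneg (div_nonneg (abs_nonneg _) hCpos.le)
    exact mul_nonneg (add_nonneg (div_nonneg (by norm_num) hCpos.le)
      (div_nonneg (by norm_num) (by positivity))) (abs_nonneg _)
  rw [hMeq]
  apply aux_opNorm_blockDiagonal_le P Q K hK0
  intro ℓ
  have hb1 : |sinc (θ ℓ * r)| ≤ 1 := aux_abs_sinc_le_one _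
  have hT1 : |sinc (θ ℓ * ρ₂)| * |θ ℓ * (c+Δc) - θ ℓ * c| ≤ |Δc|/(r-δ) := by
    by_cases ht : θ ℓ = 0
    · rw [ht]
      simp only [zero_mul, sub_self, abs_zero, mul_zero]
      exact div_nonneg (abs_nonneg _) hrδ.le
    · have hb : θ ℓ * ρ₂ ≠ 0 := mul_ne_zero ht (ne_of_gt hρ₂pos)
      have h1 : |sinc (θ ℓ * ρ₂)| ≤ 1/(|θ ℓ| * ρ₂) := by
        have := aux_abs_sinc_le _ hb
        rwa [abs_mul, abs_of_pos hρ₂pos] at this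
      have h2 : |θ ℓ * (c+Δc) - θ ℓ * c| = |θ ℓ| * |Δc| := by
        rw [show θ ℓ * (c+Δc) - θ ℓ * c = θ ℓ * Δc by ring, abs_mul]
      rw [h2]
      have hθp : (0:ℝ) < |θ ℓ| := abs_pos.mpr ht
      calc |sinc (θ ℓ * ρ₂)| * (|θ ℓ| * |Δc|)
          ≤ (1/(|θ ℓ| * ρ₂)) * (|θ ℓ| * |Δc|) :=
            mul_le_mul_of_nonneg_right h1 (by positivity)
        _ = |Δc|/ρ₂ := by field_simp
        _ ≤ |Δc|/(r-δ) := by gcongr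
  have key := aux_block_bound (sinc (θ ℓ * r)) (sinc (θ ℓ * ρ₂)) (θ ℓ * c) (θ ℓ * (c+Δc))
      C₁ C₂ Cmin (|Δc|/(r-δ)) (2*|Δr|/(r-δ)) (2*|Δr|/(r-δ))
      hCpos hC1 hC2 hb1 hT1 (hsdiff ℓ) hCdiff
  have hsum : (|Δc|/(r-δ))/Cmin + (2*|Δr|/(r-δ))/Cmin + (2*|Δr|/(r-δ))/Cmin^2 = K := by
    rw [hKdef]; field_simp; ring
  calc P ℓ^2 + Q ℓ^2
      ≤ ((|Δc|/(r-δ))/Cmin + (2*|Δr|/(r-δ))/Cmin + (2*|Δr|/(r-δ))/Cmin^2)^2 := by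
        rw [hP, hQ]; exact key
    _ = K^2 := by rw [hsum]
end
end

section
/- Let θ_max := max_{ℓ} |θ_ℓ|. Then the map t ↦ R_t is Lipschitz in operator norm with constant θ_max: for all t₁, t₂ ∈ ℝ, ‖R_{t₁} − R_{t₂}‖_op ≤ θ_max · |t₁ − t₂|. In particular, the point-wise RoPE score sensitivity to a timestamp perturbation ε satisfies |⟨R_{t_q} q, R_{t+ε} k⟩ − ⟨R_{t_q} q, R_t k⟩| ≤ ‖q‖ · ‖k‖ · θ_max · |ε| for all q, k ∈ ℝ^{2n} and t_q, t, ε ∈ ℝ. -/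
noncomputable section

open MeasureTheory
open scoped RealInnerProductSpace

/-!
Each block `Rot x - Rot y` of `R_{t₁} - R_{t₂}` acts on `ℝ²` as multiplication by the complex
number `e^{ix} - e^{iy}`, whose modulus is `√(2 - 2 cos (x - y)) ≤ |x - y|`. A block-diagonal
matrix is no larger in operator norm than its largest block, which gives the Lipschitz bound with
`x - y = θ_ℓ (t₁ - t₂)`. Since every `R_t` is a contraction, the score bound follows by
Cauchy–Schwarz.
-/

open Matrix WithLp

namespace Matrix

variable {𝕜 m o : Type*} [RCLike 𝕜] [Fintype m] [Fintype o] [DecidableEq o]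

theorem blockDiagonal_mulVec_apply (d : o → Matrix m m 𝕜) (x : m × o → 𝕜) (j : m) (i : o) :
    (blockDiagonal d *ᵥ x) (j, i) = (d i *ᵥ fun k => x (k, i)) j := by
  simp [mulVec, dotProduct, blockDiagonal_apply, Fintype.sum_prod_type_right]

variable [DecidableEq m]

theorem norm_toEuclideanCLM_blockDiagonal_le (d : o → Matrix m m 𝕜) {C : ℝ} (hC : 0 ≤ C)
    (hd : ∀ i, ‖toEuclideanCLM (𝕜 := 𝕜) (d i)‖ ≤ C) :
    ‖toEuclideanCLM (𝕜 := 𝕜) (blockDiagonal d)‖ ≤ C := by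
  refine ContinuousLinearMap.opNorm_le_bound _ hC fun v => ?_
  let slice (i : o) : EuclideanSpace 𝕜 m := toLp 2 fun j => v (j, i)
  have hv : ‖v‖ ^ 2 = ∑ i, ‖slice i‖ ^ 2 := by
    simp only [EuclideanSpace.norm_sq_eq, slice, Fintype.sum_prod_type_right]
  have hdv : ‖toEuclideanCLM (𝕜 := 𝕜) (blockDiagonal d) v‖ ^ 2 =
      ∑ i, ‖toEuclideanCLM (𝕜 := 𝕜) (d i) (slice i)‖ ^ 2 := by
    simp only [EuclideanSpace.norm_sq_eq, Fintype.sum_prod_type_right, ofLp_toEuclideanCLM,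
      blockDiagonal_mulVec_apply, slice]
  have hsq : ‖toEuclideanCLM (𝕜 := 𝕜) (blockDiagonal d) v‖ ^ 2 ≤ (C * ‖v‖) ^ 2 := by
    rw [hdv, mul_pow, hv, Finset.mul_sum]
    refine Finset.sum_le_sum fun i _ => ?_
    rw [← mul_pow]
    gcongr
    exact (toEuclideanCLM (𝕜 := 𝕜) (d i)).le_of_opNorm_le (hd i) _
  exact (sq_le_sq₀ (norm_nonneg _) (by positivity)).1 hsq

end Matrix

theorem norm_toEuclideanCLM_scaledRotation_le (c s : ℝ) :
    ‖toEuclideanCLM (𝕜 := ℝ) !![c, -s; s, c]‖ ≤ √(c ^ 2 + s ^ 2) := by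
  refine ContinuousLinearMap.opNorm_le_bound _ (Real.sqrt_nonneg _) fun w => ?_
  have hsq : ‖toEuclideanCLM (𝕜 := ℝ) !![c, -s; s, c] w‖ ^ 2 = (c ^ 2 + s ^ 2) * ‖w‖ ^ 2 := by
    simp only [EuclideanSpace.norm_sq_eq, Fin.sum_univ_two, ofLp_toEuclideanCLM, Real.norm_eq_abs,
      sq_abs, mulVec, dotProduct, of_apply, cons_val', cons_val_zero, cons_val_fin_one,
      cons_val_one]
    ring
  rw [← Real.sqrt_sq (norm_nonneg _), hsq, Real.sqrt_mul (by positivity),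
    Real.sqrt_sq (norm_nonneg _)]

theorem Rot_sub_Rot (x y : ℝ) :
    Rot x - Rot y = !![Real.cos x - Real.cos y, -(Real.sin x - Real.sin y);
      Real.sin x - Real.sin y, Real.cos x - Real.cos y] := by
  ext i j
  fin_cases i <;> fin_cases j <;> simp [Rot, neg_add_eq_sub]

theorem cos_sub_cos_sq_add_sin_sub_sin_sq_le (x y : ℝ) :
    (Real.cos x - Real.cos y) ^ 2 + (Real.sin x - Real.sin y) ^ 2 ≤ (x - y) ^ 2 := by
  have hcos := Real.one_sub_sq_div_two_le_cos (x := x - y)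
  rw [Real.cos_sub] at hcos
  nlinarith [Real.sin_sq_add_cos_sq x, Real.sin_sq_add_cos_sq y]

theorem norm_toEuclideanCLM_Rot_le (x : ℝ) : ‖toEuclideanCLM (𝕜 := ℝ) (Rot x)‖ ≤ 1 := by
  have h := norm_toEuclideanCLM_scaledRotation_le (Real.cos x) (Real.sin x)
  rwa [Real.cos_sq_add_sin_sq, Real.sqrt_one] at h

theorem norm_toEuclideanCLM_Rot_sub_Rot_le (x y : ℝ) :
    ‖toEuclideanCLM (𝕜 := ℝ) (Rot x - Rot y)‖ ≤ |x - y| := by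
  rw [Rot_sub_Rot, ← Real.sqrt_sq_eq_abs]
  exact (norm_toEuclideanCLM_scaledRotation_le _ _).trans
    (Real.sqrt_le_sqrt (cos_sub_cos_sq_add_sin_sub_sin_sq_le x y))

theorem opNorm_RoPE_le {n : ℕ} (θ : Fin n → ℝ) (t : ℝ) : opNorm (RoPE θ t) ≤ 1 :=
  norm_toEuclideanCLM_blockDiagonal_le _ zero_le_one fun _ => norm_toEuclideanCLM_Rot_le _

theorem opNorm_RoPE_sub_RoPE_le {n : ℕ} {θ : Fin n → ℝ} {C : ℝ} (hC : 0 ≤ C)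
    (hθ : ∀ ℓ, |θ ℓ| ≤ C) (t₁ t₂ : ℝ) :
    opNorm (RoPE θ t₁ - RoPE θ t₂) ≤ C * |t₁ - t₂| := by
  rw [opNorm, RoPE, RoPE, ← blockDiagonal_sub]
  refine norm_toEuclideanCLM_blockDiagonal_le _ (by positivity) fun ℓ => ?_
  calc ‖toEuclideanCLM (𝕜 := ℝ) (Rot (θ ℓ * t₁) - Rot (θ ℓ * t₂))‖
      ≤ |θ ℓ * t₁ - θ ℓ * t₂| := norm_toEuclideanCLM_Rot_sub_Rot_le _ _
    _ = |θ ℓ| * |t₁ - t₂| := by rw [← mul_sub, abs_mul]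
    _ ≤ C * |t₁ - t₂| := by gcongr; exact hθ ℓ

theorem abs_inner_sub_inner_le {E F : Type*} [NormedAddCommGroup E] [NormedSpace ℝ E]
    [NormedAddCommGroup F] [InnerProductSpace ℝ F] (u : F) (B B' : E →L[ℝ] F) (k : E) :
    |⟪u, B k⟫ - ⟪u, B' k⟫| ≤ ‖u‖ * ‖k‖ * ‖B - B'‖ := by
  rw [← inner_sub_right, ← _root_.sub_apply]
  calc |⟪u, (B - B') k⟫| ≤ ‖u‖ * ‖(B - B') k‖ := abs_real_inner_le_norm _ _
    _ ≤ ‖u‖ * (‖B - B'‖ * ‖k‖) := by gcongr; exact (B - B').le_opNorm k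
    _ = ‖u‖ * ‖k‖ * ‖B - B'‖ := by ring

theorem rope_lipschitz_and_score_sensitivity_general (n : ℕ) (θ : Fin n → ℝ)
    (θmax : ℝ) (hθmax : θmax = ⨆ ℓ : Fin n, |θ ℓ|) :
    (∀ t₁ t₂ : ℝ, opNorm (RoPE θ t₁ - RoPE θ t₂) ≤ θmax * |t₁ - t₂|) ∧
    (∀ (q k : EuclideanSpace ℝ (Fin 2 × Fin n)) (tq t ε : ℝ),
      |⟪mApply (RoPE θ tq) q, mApply (RoPE θ (t + ε)) k⟫ -
          ⟪mApply (RoPE θ tq) q, mApply (RoPE θ t) k⟫| ≤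
        ‖q‖ * ‖k‖ * θmax * |ε|) := by
  have hθ : ∀ ℓ, |θ ℓ| ≤ θmax := hθmax ▸ le_ciSup (Set.finite_range _).bddAbove
  have hθmax_nonneg : 0 ≤ θmax := hθmax ▸ Real.iSup_nonneg fun ℓ => abs_nonneg (θ ℓ)
  have hlip := opNorm_RoPE_sub_RoPE_le hθmax_nonneg hθ
  refine ⟨hlip, fun q k tq t ε => ?_⟩
  have hq : ‖mApply (RoPE θ tq) q‖ ≤ ‖q‖ :=
    ((toEuclideanCLM (𝕜 := ℝ) (RoPE θ tq)).le_of_opNorm_le (opNorm_RoPE_le θ tq) q).trans_eq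
      (one_mul _)
  calc _ ≤ ‖mApply (RoPE θ tq) q‖ * ‖k‖ * opNorm (RoPE θ (t + ε) - RoPE θ t) := by
        rw [opNorm, map_sub]
        exact abs_inner_sub_inner_le _ (toEuclideanCLM (𝕜 := ℝ) _) (toEuclideanCLM (𝕜 := ℝ) _) k
    _ ≤ ‖q‖ * ‖k‖ * (θmax * |t + ε - t|) := by
        gcongr
        · exact norm_nonneg _
        · exact hlip _ _
    _ = ‖q‖ * ‖k‖ * θmax * |ε| := by rw [add_sub_cancel_left]; ring

/-- `t ↦ R_t` is Lipschitz in operator norm with constant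
`θ_max = max_ℓ |θ_ℓ|`; in particular the point-wise RoPE score sensitivity to a
timestamp perturbation `ε` is at most `‖q‖ ‖k‖ θ_max |ε|`. -/
theorem rope_lipschitz_and_score_sensitivity (n : ℕ) (hn : 1 ≤ n) (θ : Fin n → ℝ)
    (θmax : ℝ) (hθmax : θmax = ⨆ ℓ : Fin n, |θ ℓ|) :
    (∀ t₁ t₂ : ℝ, opNorm (RoPE θ t₁ - RoPE θ t₂) ≤ θmax * |t₁ - t₂|) ∧
    (∀ (q k : EuclideanSpace ℝ (Fin 2 × Fin n)) (tq t ε : ℝ),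
      |⟪mApply (RoPE θ tq) q, mApply (RoPE θ (t + ε)) k⟫ -
          ⟪mApply (RoPE θ tq) q, mApply (RoPE θ t) k⟫| ≤
        ‖q‖ * ‖k‖ * θmax * |ε|) :=
  rope_lipschitz_and_score_sensitivity_general n θ θmax hθmax
end
end
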